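/- Let d be an odd prime and n ∈ ℕ. For every symmetric n×n matrix Φ over ZMod d, the quadratic diagonal gate D_Φ is a Clifford gate: D_Φ is unitary and for every Pauli gate P ∈ C_1^n, D_Φ P D_Φ* ∈ C_1^n. -/
import Mathlib


open Matrix

noncomputable section

/-- The space of `n`-qudit gates: `d^n × d^n` complex matrices indexed by `(ZMod d)^n`. -/
abbrev Mat (d n : ℕ) := Matrix (Fin n → ZMod d) (Fin n → ZMod d) ℂ

/-- The primitive `d`-th root of unity `ω = exp(2πi/d)`. -/
def omega (d : ℕ) : ℂ := Complex.exp (2 * Real.pi * Complex.I / d)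

/-- `ω` raised to the canonical integer lift of `c : ZMod d`. -/
def omegaPow (d : ℕ) (c : ZMod d) : ℂ := omega d ^ c.val

/-- The Pauli gate `Z^p`, acting by `Z^p |z⟩ = ω^(p·z) |z⟩`. -/
def ZP (d n : ℕ) [NeZero d] (p : Fin n → ZMod d) : Mat d n :=
  Matrix.diagonal fun z => omegaPow d (p ⬝ᵥ z)

/-- The Pauli gate `X^q`, acting by `X^q |z⟩ = |z + q⟩`. -/
def XQ (d n : ℕ) [NeZero d] (q : Fin n → ZMod d) : Mat d n :=
  Matrix.of fun z' z => if z' = z + q then 1 else 0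

/-- The basic Pauli gate `Z_i`. -/
def Zi (d n : ℕ) [NeZero d] (i : Fin n) : Mat d n := ZP d n (Pi.single i 1)

/-- The basic Pauli gate `X_i`. -/
def Xi (d n : ℕ) [NeZero d] (i : Fin n) : Mat d n := XQ d n (Pi.single i 1)

/-- The Pauli group `C_1^n`. -/
def Pauli (d n : ℕ) [NeZero d] : Set (Mat d n) :=
  { M | ∃ (c : ZMod d) (p q : Fin n → ZMod d), M = omegaPow d c • (ZP d n p * XQ d n q) }

/-- The Clifford group `C_2^n`. -/
def Clifford (d n : ℕ) [NeZero d] : Set (Mat d n) :=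
  { C | C ∈ Matrix.unitaryGroup (Fin n → ZMod d) ℂ ∧ ∀ P ∈ Pauli d n, C * P * Cᴴ ∈ Pauli d n }

/-- The third level `C_3^n` of the Clifford hierarchy. -/
def Third (d n : ℕ) [NeZero d] : Set (Mat d n) :=
  { G | G ∈ Matrix.unitaryGroup (Fin n → ZMod d) ℂ ∧ ∀ P ∈ Pauli d n, G * P * Gᴴ ∈ Clifford d n }

/-- The quadratic diagonal gate `D_Φ |z⟩ = ω^(zᵀ Φ z) |z⟩`. -/
def quadGate (d n : ℕ) [NeZero d] (Φ : Matrix (Fin n) (Fin n) (ZMod d)) : Mat d n :=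
  Matrix.diagonal fun z => omegaPow d (z ⬝ᵥ (Φ *ᵥ z))

/-- A gate is semi-Clifford if it is `C₁ D C₂` for Cliffords `C₁, C₂` and a
diagonal third-level gate `D`. -/
def SemiClifford (d n : ℕ) [NeZero d] (G : Mat d n) : Prop :=
  ∃ C₁ ∈ Clifford d n, ∃ C₂ ∈ Clifford d n, ∃ D ∈ Third d n, D.IsDiag ∧ G = C₁ * D * C₂

/-- A Clifford gate is almost diagonal if it is `D_Φ P` for symmetric `Φ` and Pauli `P`. -/
def AlmostDiag (d n : ℕ) [NeZero d] (M : Mat d n) : Prop :=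
  ∃ Φ : Matrix (Fin n) (Fin n) (ZMod d), Φ.IsSymm ∧ ∃ P ∈ Pauli d n, M = quadGate d n Φ * P

/-- A third-level gate is simplified if its conjugate tuple consists of
almost diagonal Clifford gates. -/
def Simplified (d n : ℕ) [NeZero d] (G : Mat d n) : Prop :=
  ∀ i : Fin n, AlmostDiag d n (G * Zi d n i * Gᴴ) ∧ AlmostDiag d n (G * Xi d n i * Gᴴ)

/-- The symplectic product on `(ZMod d)⁴`. -/
def symp4 (d : ℕ) (u v : Fin 4 → ZMod d) : ZMod d :=
  u 0 * v 1 - u 1 * v 0 + u 2 * v 3 - u 3 * v 2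


lemma omega_pow_d (d : ℕ) [NeZero d] : omega d ^ d = 1 := by
  have hd : (d:ℂ) ≠ 0 := Nat.cast_ne_zero.mpr (NeZero.ne d)
  rw [omega, ← Complex.exp_nat_mul, mul_div_cancel₀ _ hd, Complex.exp_two_pi_mul_I]

lemma omega_pow_mod (d : ℕ) [NeZero d] (m : ℕ) : omega d ^ (m % d) = omega d ^ m := by
  conv_rhs => rw [← Nat.mod_add_div m d]
  rw [pow_add, pow_mul, omega_pow_d, one_pow, mul_one]

lemma omegaPow_add (d : ℕ) [NeZero d] (a b : ZMod d) :
    omegaPow d (a + b) = omegaPow d a * omegaPow d b := by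
  rw [omegaPow, omegaPow, omegaPow, ← pow_add, ZMod.val_add, omega_pow_mod]

lemma omegaPow_zero (d : ℕ) [NeZero d] : omegaPow d 0 = 1 := by
  simp [omegaPow, ZMod.val_zero]

lemma star_omega (d : ℕ) : star (omega d) = (omega d)⁻¹ := by
  rw [omega, RCLike.star_def, ← Complex.exp_conj, ← Complex.exp_neg]
  congr 1
  simp [map_div₀, Complex.conj_I, Complex.conj_ofNat]
  ring

lemma star_omegaPow (d : ℕ) [NeZero d] (c : ZMod d) :
    star (omegaPow d c) = omegaPow d (-c) := by
  have h1 : omegaPow d c * omegaPow d (-c) = 1 := by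
    rw [← omegaPow_add, add_neg_cancel, omegaPow_zero]
  rw [omegaPow, star_pow, star_omega, inv_pow]
  exact inv_eq_of_mul_eq_one_right h1


/-- For every symmetric `Φ`, the quadratic diagonal gate `D_Φ` is a Clifford gate. -/
theorem stmt17 (d n : ℕ) [NeZero d] (hp : Nat.Prime d) (hodd : Odd d)
    (Φ : Matrix (Fin n) (Fin n) (ZMod d)) (hΦ : Φ.IsSymm) :
    quadGate d n Φ ∈ Matrix.unitaryGroup (Fin n → ZMod d) ℂ ∧
    ∀ P ∈ Pauli d n, quadGate d n Φ * P * (quadGate d n Φ)ᴴ ∈ Pauli d n := by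
  have hsymm : ∀ u v : Fin n → ZMod d, u ⬝ᵥ (Φ *ᵥ v) = v ⬝ᵥ (Φ *ᵥ u) := by
    intro u v
    rw [Matrix.dotProduct_mulVec, ← Matrix.mulVec_transpose, hΦ.eq, dotProduct_comm]
  constructor
  · rw [Matrix.mem_unitaryGroup_iff, Matrix.star_eq_conjTranspose, quadGate,
      Matrix.diagonal_conjTranspose, Matrix.diagonal_mul_diagonal]
    have h1 : ∀ z : Fin n → ZMod d,
        omegaPow d (z ⬝ᵥ (Φ *ᵥ z)) * star (fun w : Fin n → ZMod d => omegaPow d (w ⬝ᵥ (Φ *ᵥ w))) z = 1 := by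
      intro z
      rw [Pi.star_apply, star_omegaPow, ← omegaPow_add, add_neg_cancel, omegaPow_zero]
    simp only [h1]
    exact Matrix.diagonal_one
  · rintro P ⟨c, p, q, rfl⟩
    refine ⟨c - q ⬝ᵥ (Φ *ᵥ q), p + 2 • (Φ *ᵥ q), q, ?_⟩
    ext z' z
    simp only [Matrix.mul_smul, Matrix.smul_mul, Matrix.smul_apply, smul_eq_mul]
    by_cases h : z' = z + q
    · subst h
      have lhs_eq : (quadGate d n Φ * (ZP d n p * XQ d n q) * (quadGate d n Φ)ᴴ) (z + q) z =
          omegaPow d ((z+q) ⬝ᵥ (Φ *ᵥ (z+q))) * omegaPow d (p ⬝ᵥ (z+q)) *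
            omegaPow d (-(z ⬝ᵥ (Φ *ᵥ z))) := by
        rw [← star_omegaPow]
        simp [quadGate, ZP, XQ, Matrix.mul_apply, Matrix.diagonal_apply,
          Matrix.conjTranspose_apply, Finset.mul_sum, ite_and, mul_comm, mul_assoc, mul_left_comm]
      have rhs_eq : (ZP d n (p + 2 • (Φ *ᵥ q)) * XQ d n q) (z + q) z =
          omegaPow d ((p + 2 • (Φ *ᵥ q)) ⬝ᵥ (z + q)) := by
        simp only [ZP, XQ, Matrix.mul_apply, Matrix.diagonal_apply, Matrix.of_apply,
          ite_mul, mul_ite, mul_one, mul_zero, zero_mul, Finset.sum_ite_eq',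
          Finset.mem_univ, if_true, if_pos rfl]
      rw [lhs_eq, rhs_eq, ← omegaPow_add, ← omegaPow_add, ← omegaPow_add, ← omegaPow_add]
      congr 1
      simp only [Matrix.mulVec_add, add_dotProduct, dotProduct_add,
        smul_dotProduct]
      simp only [nsmul_eq_mul, Nat.cast_ofNat]
      rw [show q ⬝ᵥ (Φ *ᵥ z) = z ⬝ᵥ (Φ *ᵥ q) from hsymm q z,
        dotProduct_comm (Φ *ᵥ q) z, dotProduct_comm (Φ *ᵥ q) q]
      ring
    · have lhs0 : (quadGate d n Φ * (ZP d n p * XQ d n q) * (quadGate d n Φ)ᴴ) z' z = 0 := by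
        simp [quadGate, ZP, XQ, Matrix.mul_apply, Matrix.diagonal_apply,
          Matrix.conjTranspose_apply, h, Finset.mul_sum, ite_and]
      have rhs0 : (ZP d n (p + 2 • (Φ *ᵥ q)) * XQ d n q) z' z = 0 := by
        simp [ZP, XQ, Matrix.mul_apply, Matrix.diagonal_apply, h]
      rw [lhs0, rhs0, mul_zero, mul_zero]


end
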